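/- Let X be a zero-dimensional topological space (i.e., a space with a basis of clopen sets). If μ and ν are continuous valuations on X with total mass μ(X) = ν(X) = 1 and μ(U) ≤ ν(U) for all open sets U, then μ = ν. In other words, the pointwise order on probability valuations over a zero-dimensional space is discrete. -/

import Mathlib

open scoped ENNReal

/-- A continuous valuation on a topological space. -/
structure ContVal (X : Type) [TopologicalSpace X] where
  toFun : Set X → ℝ≥0∞
  empty' : toFun ∅ = 0
  mono' : ∀ U V : Set X, IsOpen U → IsOpen V → U ⊆ V → toFun U ≤ toFun V
  modular' : ∀ U V : Set X, IsOpen U → IsOpen V →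
    toFun U + toFun V = toFun (U ∪ V) + toFun (U ∩ V)
  cont' : ∀ (ι : Type) (U : ι → Set X), (∀ i, IsOpen (U i)) →
    Directed (· ⊆ ·) U → toFun (⋃ i, U i) = ⨆ i, toFun (U i)

/-!
A clopen set `V` splits the total mass as `μ V + μ Vᶜ = μ X`. Hence if `μ ≤ ν` and both have the
same finite total mass, the inequalities `μ V ≤ ν V` and `μ Vᶜ ≤ ν Vᶜ` must both be equalities.
In a zero-dimensional space every open set is the directed union of the clopen sets it contains,
so Scott continuity propagates the equality from clopen sets to all open sets.
-/

namespace ContVal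

variable {X : Type} [TopologicalSpace X]

theorem apply_add_apply_compl (μ : ContVal X) {V : Set X} (hV : IsClopen V) :
    μ.toFun V + μ.toFun Vᶜ = μ.toFun Set.univ := by
  simpa [μ.empty'] using μ.modular' V Vᶜ hV.isOpen hV.compl.isOpen

theorem apply_eq_of_isClopen {μ ν : ContVal X} (huniv : μ.toFun Set.univ = ν.toFun Set.univ)
    (hfin : ν.toFun Set.univ ≠ ∞) (hle : ∀ U : Set X, IsOpen U → μ.toFun U ≤ ν.toFun U)
    {V : Set X} (hV : IsClopen V) : μ.toFun V = ν.toFun V := by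
  have hcompl_ne_top : ν.toFun Vᶜ ≠ ∞ :=
    ne_top_of_le_ne_top hfin (ν.mono' _ _ hV.compl.isOpen isOpen_univ (Set.subset_univ _))
  refine le_antisymm (hle V hV.isOpen) (ENNReal.le_of_add_le_add_right hcompl_ne_top ?_)
  calc ν.toFun V + ν.toFun Vᶜ = μ.toFun V + μ.toFun Vᶜ := by
        rw [apply_add_apply_compl ν hV, apply_add_apply_compl μ hV, huniv]
    _ ≤ μ.toFun V + ν.toFun Vᶜ := add_le_add_right (hle _ hV.compl.isOpen) _

theorem apply_eq_iSup_isClopen_subset {B : Set (Set X)}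
    (hB : TopologicalSpace.IsTopologicalBasis B) (hBcl : ∀ V ∈ B, IsClopen V)
    (μ : ContVal X) {U : Set X} (hU : IsOpen U) :
    μ.toFun U = ⨆ V : {V : Set X // IsClopen V ∧ V ⊆ U}, μ.toFun V := by
  have hcover : ⋃ V : {V : Set X // IsClopen V ∧ V ⊆ U}, (V : Set X) = U := by
    refine Set.Subset.antisymm (Set.iUnion_subset fun V => V.2.2) fun x hx => ?_
    obtain ⟨V, hVB, hxV, hVU⟩ := hB.exists_subset_of_mem_open hx hU
    exact Set.mem_iUnion.2 ⟨⟨V, hBcl V hVB, hVU⟩, hxV⟩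
  have hdirected : Directed (· ⊆ ·) fun V : {V : Set X // IsClopen V ∧ V ⊆ U} => (V : Set X) :=
    fun V W => ⟨⟨V.1 ∪ W.1, V.2.1.union W.2.1, Set.union_subset V.2.2 W.2.2⟩,
      Set.subset_union_left, Set.subset_union_right⟩
  conv_lhs => rw [← hcover]
  exact μ.cont' _ _ (fun V => V.2.1.isOpen) hdirected

end ContVal

/-- On a zero-dimensional space, the pointwise order on probability valuations is discrete. -/
theorem stmt0 {X : Type} [TopologicalSpace X]
    (hzd : ∃ B : Set (Set X), TopologicalSpace.IsTopologicalBasis B ∧ ∀ U ∈ B, IsClopen U)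
    (μ ν : ContVal X) (hμ : μ.toFun Set.univ = 1) (hν : ν.toFun Set.univ = 1)
    (hle : ∀ U : Set X, IsOpen U → μ.toFun U ≤ ν.toFun U) :
    ∀ U : Set X, IsOpen U → μ.toFun U = ν.toFun U := by
  obtain ⟨B, hB, hBcl⟩ := hzd
  intro U hU
  rw [μ.apply_eq_iSup_isClopen_subset hB hBcl hU, ν.apply_eq_iSup_isClopen_subset hB hBcl hU]
  exact iSup_congr fun V =>
    ContVal.apply_eq_of_isClopen (hμ.trans hν.symm) (by simp [hν]) hle V.2.1
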